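/- Every antimatroid admits a representation by maximum-weight matchings: for every antimatroid (S, 𝓕) on a finite set S there exists a weighted matching instance (G = (U,V;E), w) with V = S, in which all matchings have pairwise distinct weights, such that the codomain of the induced map F : 2^U → 2^V coincides with 𝓕, i.e., { F(U') : U' ⊆ U } = 𝓕. -/

import Mathlib

open scoped Classical

/-- `M` is a matching with edges inside the edge set `E`:
no two distinct edges of `M` share a left or a right endpoint. -/
def IsMatching {U V : Type*} (E M : Finset (U × V)) : Prop :=
  M ⊆ E ∧ ∀ e₁ ∈ M, ∀ e₂ ∈ M, (e₁.1 = e₂.1 ∨ e₁.2 = e₂.2) → e₁ = e₂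

/-- The edge set of the subgraph `G[U' ∪ V]` induced by deleting
the left vertices outside `U'` (and their incident edges). -/
noncomputable def restrictL {U V : Type*} (E : Finset (U × V)) (U' : Finset U) : Finset (U × V) :=
  E.filter (fun e => e.1 ∈ U')

/-- The weight of a matching: the sum of the weights of its edges. -/
noncomputable def mWeight {U V : Type*} (w : U × V → ℝ) (M : Finset (U × V)) : ℝ :=
  ∑ e ∈ M, w e

/-- `M` is a maximum-weight matching of the graph with edge set `E`. -/
def IsMaxMatching {U V : Type*} (E : Finset (U × V)) (w : U × V → ℝ)
    (M : Finset (U × V)) : Prop :=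
  IsMatching E M ∧ ∀ M' : Finset (U × V), IsMatching E M' → mWeight w M' ≤ mWeight w M

/-- All matchings of the graph with edge set `E` have pairwise distinct weights. -/
def DistinctWeights {U V : Type*} (E : Finset (U × V)) (w : U × V → ℝ) : Prop :=
  ∀ M₁ M₂ : Finset (U × V), IsMatching E M₁ → IsMatching E M₂ → M₁ ≠ M₂ →
    mWeight w M₁ ≠ mWeight w M₂

/-- The codomain `{ F(U') : U' ⊆ U }` of the map `F` induced by the weighted
matching instance: the family of all sets of right vertices matched by the
(unique) maximum-weight matching `MM(G, w; U')` of a subgraph `G[U' ∪ V]`. -/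
def mmFamily {U V : Type*} (E : Finset (U × V)) (w : U × V → ℝ) : Set (Finset V) :=
  {X | ∃ (U' : Finset U) (M : Finset (U × V)),
    IsMaxMatching (restrictL E U') w M ∧ X = M.image Prod.snd}


/-!
Choose for every feasible set `X` a feasible ordering `x₀, …, x_{m-1}` of it (accessibility), and
give `X` left vertices `u₀, …, u_{m-1}`, with `uᵢ` adjacent to `x₀, …, xᵢ`. Weights `2 ^ rank`
make every edge heavier than all edges of lower priority together, where earlier vertices and,
at a vertex, earlier elements of the ordering have priority; so a maximum-weight matching is
greedy: an edge is left out only for an adjacent matched edge of higher priority. Hence a left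
vertex matched to `xᵢ` forces `x₀, …, x_{i-1}` to be matched as well, so the matched set is a
union of feasible prefixes, which is feasible by union-closedness; and on the vertices of a
single `X` greedy matches `uᵢ` to `xᵢ`, realizing `X`.
-/

open Finset

section Matchings

variable {U V : Type*}

theorem mem_restrictL {E : Finset (U × V)} {U' : Finset U} {e : U × V} :
    e ∈ restrictL E U' ↔ e ∈ E ∧ e.1 ∈ U' :=
  mem_filter

theorem restrictL_subset (E : Finset (U × V)) (U' : Finset U) : restrictL E U' ⊆ E :=
  filter_subset _ _

theorem exists_isMaxMatching (E : Finset (U × V)) (w : U × V → ℝ) :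
    ∃ M, IsMaxMatching E w M := by
  obtain ⟨M, hM, hmax⟩ := (E.powerset.filter (IsMatching E)).exists_max_image (mWeight w)
    ⟨∅, mem_filter.2 ⟨empty_mem_powerset E, empty_subset E, by simp⟩⟩
  refine ⟨M, (mem_filter.1 hM).2, fun M' hM' => hmax M' ?_⟩
  exact mem_filter.2 ⟨mem_powerset.2 hM'.1, hM'⟩

theorem sum_two_pow_lt {α : Type*} {C : Finset α} {r : α → ℕ} {n : ℕ} (hr : Set.InjOn r C)
    (hlt : ∀ f ∈ C, r f < n) : ∑ f ∈ C, (2 : ℝ) ^ r f < 2 ^ n := by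
  rw [← sum_image hr]
  exact_mod_cast Nat.geomSum_lt le_rfl (by simpa using hlt)

theorem distinctWeights_two_pow {E : Finset (U × V)} {r : U × V → ℕ} (hr : Set.InjOn r E) :
    DistinctWeights E (fun e => 2 ^ r e) := by
  intro M₁ M₂ h₁ h₂ hne heq
  have hweight (M : Finset (U × V)) (hM : IsMatching E M) :
      mWeight (fun e => 2 ^ r e) M = ((∑ s ∈ M.image r, 2 ^ s : ℕ) : ℝ) := by
    rw [mWeight, sum_image (hr.mono hM.1)]
    push_cast
    rfl
  rw [hweight M₁ h₁, hweight M₂ h₂, Nat.cast_inj] at heq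
  exact hne ((image_eq_image_iff_of_injOn hr h₁.1 h₂.1).1 (geomSum_injective le_rfl heq))

theorem IsMatching.insert_filter_nonadjacent {E M : Finset (U × V)} {e : U × V}
    (hM : IsMatching E M) (he : e ∈ E) :
    IsMatching E (insert e (M.filter fun f => ¬(f.1 = e.1 ∨ f.2 = e.2))) := by
  refine ⟨insert_subset he ((filter_subset _ _).trans hM.1), ?_⟩
  simp only [mem_insert, mem_filter]
  rintro e₁ (rfl | ⟨h₁, hd₁⟩) e₂ (rfl | ⟨h₂, hd₂⟩) hshare
  · rfl
  · exact absurd (hshare.imp Eq.symm Eq.symm) hd₂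
  · exact absurd hshare hd₁
  · exact hM.2 e₁ h₁ e₂ h₂ hshare

end Matchings

section LexWeights

variable {U V β : Type*} [LinearOrder β] (E : Finset (U × V)) (pos : U × V → β)

def lexRank (e : U × V) : ℕ := #{f ∈ E | pos e < pos f}

/-- `2 ^ lexRank E pos e` exceeds the total weight of all edges of lower priority (larger `pos`). -/
noncomputable def lexWeight (e : U × V) : ℝ := 2 ^ lexRank E pos e

variable {E pos}

theorem lexRank_lt_lexRank {e f : U × V} (hf : f ∈ E) (h : pos e < pos f) :
    lexRank E pos f < lexRank E pos e := by
  refine card_lt_card ⟨monotone_filter_right _ fun g _ hg => h.trans hg, fun hsub => ?_⟩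
  exact lt_irrefl _ (mem_filter.1 (hsub (mem_filter.2 ⟨hf, h⟩))).2

theorem lexRank_injOn (hpos : Set.InjOn pos E) : Set.InjOn (lexRank E pos) E := by
  intro e he f hf hef
  refine hpos he hf (le_antisymm ?_ ?_) <;> by_contra! hlt
  · exact (lexRank_lt_lexRank he hlt).ne hef
  · exact (lexRank_lt_lexRank hf hlt).ne' hef

theorem distinctWeights_lexWeight (hpos : Set.InjOn pos E) :
    DistinctWeights E (lexWeight E pos) :=
  distinctWeights_two_pow (lexRank_injOn hpos)

theorem IsMaxMatching.exists_adjacent_pos_lt {E' M : Finset (U × V)} {e : U × V}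
    (hE' : E' ⊆ E) (hpos : Set.InjOn pos E) (hM : IsMaxMatching E' (lexWeight E pos) M)
    (he : e ∈ E') (heM : e ∉ M) :
    ∃ f ∈ M, (f.1 = e.1 ∨ f.2 = e.2) ∧ pos f < pos e := by
  by_contra! hle
  set p : U × V → Prop := fun f => f.1 = e.1 ∨ f.2 = e.2
  have hM' := hM.1.insert_filter_nonadjacent he
  have hlight : ∑ f ∈ M.filter p, lexWeight E pos f < lexWeight E pos e := by
    refine sum_two_pow_lt ((lexRank_injOn hpos).mono ?_) fun f hf => ?_
    · exact fun f hf => hE' (hM.1.1 (mem_filter.1 hf).1)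
    obtain ⟨hfM, hfe⟩ := mem_filter.1 hf
    have hne : pos e ≠ pos f := fun h =>
      heM (hpos (hE' he) (hE' (hM.1.1 hfM)) h ▸ hfM)
    exact lexRank_lt_lexRank (hE' (hM.1.1 hfM)) ((hle f hfM hfe).lt_of_ne hne)
  have hgain := hM.2 _ hM'
  have heM' : e ∉ M.filter fun f => ¬p f := fun h => heM (mem_filter.1 h).1
  rw [mWeight, mWeight, sum_insert heM', ← sum_filter_add_sum_filter_not M p] at hgain
  linarith

end LexWeights

section PrefixInstance

variable {J V : Type*} (L : J → List V)

noncomputable def prefixPos [LinearOrder J] {k : ℕ} (e : (J × Fin k) × V) : J ×ₗ ℕ ×ₗ ℕ :=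
  toLex (e.1.1, toLex ((e.1.2 : ℕ), (L e.1.1).idxOf e.2))

noncomputable def prefixEdges [Fintype J] [Fintype V] (k : ℕ) : Finset ((J × Fin k) × V) :=
  {e | e.2 ∈ (L e.1.1).take (e.1.2 + 1)}

variable {L} {k : ℕ}

theorem prefixPos_lt_prefixPos_iff [LinearOrder J] {e f : (J × Fin k) × V} (h : e.1.1 = f.1.1) :
    prefixPos L e < prefixPos L f ↔
      (e.1.2 : ℕ) < f.1.2 ∨ (e.1.2 : ℕ) = f.1.2 ∧ (L e.1.1).idxOf e.2 < (L e.1.1).idxOf f.2 := by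
  simp only [prefixPos, Prod.Lex.toLex_lt_toLex, h, lt_self_iff_false, true_and, false_or]

variable [Fintype J] [Fintype V]

theorem mem_prefixEdges {e : (J × Fin k) × V} :
    e ∈ prefixEdges L k ↔ e.2 ∈ L e.1.1 ∧ (L e.1.1).idxOf e.2 ≤ e.1.2 := by
  rw [prefixEdges, mem_filter, Nat.le_iff_lt_add_one]
  refine ⟨fun h => ?_, fun h => ?_⟩
  · have hmem := List.mem_of_mem_take h.2
    exact ⟨hmem, (List.mem_take_iff_idxOf_lt hmem).1 h.2⟩
  · exact ⟨mem_univ e, (List.mem_take_iff_idxOf_lt h.1).2 h.2⟩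

theorem prefixPos_injOn [LinearOrder J] : Set.InjOn (prefixPos (k := k) L) (prefixEdges L k) := by
  intro e he f hf hef
  simp only [prefixPos, toLex_inj, Prod.mk.injEq] at hef
  obtain ⟨hj, hi, hidx⟩ := hef
  have he' := (mem_prefixEdges.1 he).1
  rw [hj] at hidx he'
  exact Prod.ext (Prod.ext hj (Fin.ext hi)) ((List.idxOf_inj he').1 hidx)

end PrefixInstance

section PrefixMatchings

variable {J V : Type*} [LinearOrder J] [Fintype J] [Fintype V] {L : J → List V} {k : ℕ}

variable (L k) in
noncomputable def prefixWeight : (J × Fin k) × V → ℝ :=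
  lexWeight (prefixEdges L k) (prefixPos L)

theorem IsMaxMatching.image_snd_eq_sup_prefix {U' : Finset (J × Fin k)}
    {M : Finset ((J × Fin k) × V)}
    (hM : IsMaxMatching (restrictL (prefixEdges L k) U') (prefixWeight L k) M) :
    M.image Prod.snd = M.sup fun f => ((L f.1.1).take ((L f.1.1).idxOf f.2 + 1)).toFinset := by
  have hE (f) (hf : f ∈ M) := mem_restrictL.1 (hM.1.1 hf)
  refine Subset.antisymm (fun b hb => ?_) (fun b hb => ?_)
  · obtain ⟨f, hf, rfl⟩ := mem_image.1 hb
    have hfL := (mem_prefixEdges.1 (hE f hf).1).1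
    exact mem_sup.2 ⟨f, hf,
      List.mem_toFinset.2 ((List.mem_take_iff_idxOf_lt hfL).2 (Nat.lt_succ_self _))⟩
  obtain ⟨f, hf, hbf⟩ := mem_sup.1 hb
  have hfi := (mem_prefixEdges.1 (hE f hf).1).2
  have hbL := List.mem_of_mem_take (List.mem_toFinset.1 hbf)
  have hbf' := Nat.lt_succ_iff.1 ((List.mem_take_iff_idxOf_lt hbL).1 (List.mem_toFinset.1 hbf))
  rcases eq_or_ne b f.2 with rfl | hne
  · exact mem_image_of_mem _ hf
  have hlt := hbf'.lt_of_ne (mt (List.idxOf_inj hbL).1 hne)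
  have he : (f.1, b) ∈ restrictL (prefixEdges L k) U' :=
    mem_restrictL.2 ⟨mem_prefixEdges.2 ⟨hbL, hbf'.trans hfi⟩, (hE f hf).2⟩
  have heM : (f.1, b) ∉ M := fun h => hne (congrArg Prod.snd (hM.1.2 _ h f hf (Or.inl rfl)))
  obtain ⟨g, hg, hadj | hadj, hpos⟩ :=
    hM.exists_adjacent_pos_lt (restrictL_subset _ _) prefixPos_injOn he heM
  · obtain rfl : g = f := hM.1.2 g hg f hf (Or.inl hadj)
    have := (prefixPos_lt_prefixPos_iff (e := g) (f := (g.1, b)) rfl).1 hpos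
    dsimp only at this
    omega
  · exact mem_image.2 ⟨g, hg, hadj⟩

theorem IsMaxMatching.image_snd_eq_of_block {j : J} (hnd : (L j).Nodup)
    (hk : (L j).length ≤ k) {M : Finset ((J × Fin k) × V)}
    (hM : IsMaxMatching (restrictL (prefixEdges L k) ({j} ×ˢ univ)) (prefixWeight L k) M) :
    M.image Prod.snd = (L j).toFinset := by
  have hE (f) (hf : f ∈ M) : f ∈ prefixEdges L k ∧ f.1.1 = j := by
    obtain ⟨hfE, hfU⟩ := mem_restrictL.1 (hM.1.1 hf)
    exact ⟨hfE, mem_singleton.1 (mem_product.1 hfU).1⟩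
  refine Subset.antisymm (fun b hb => ?_) (fun b hb => ?_)
  · obtain ⟨f, hf, rfl⟩ := mem_image.1 hb
    obtain ⟨hfE, rfl⟩ := hE f hf
    exact List.mem_toFinset.2 (mem_prefixEdges.1 hfE).1
  suffices hdiag : ∀ i (hi : i < (L j).length), ((j, ⟨i, hi.trans_le hk⟩), (L j)[i]) ∈ M by
    obtain ⟨i, hi, rfl⟩ := List.getElem_of_mem (List.mem_toFinset.1 hb)
    exact mem_image_of_mem _ (hdiag i hi)
  intro i
  induction i using Nat.strong_induction_on with
  | _ i ih =>
  intro hi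
  by_contra heM
  have hidx : (L j).idxOf (L j)[i] = i := hnd.idxOf_getElem i hi
  have he : ((j, ⟨i, hi.trans_le hk⟩), (L j)[i]) ∈ restrictL (prefixEdges L k) ({j} ×ˢ univ) :=
    mem_restrictL.2 ⟨mem_prefixEdges.2 ⟨List.getElem_mem hi, hidx.le⟩, by simp⟩
  obtain ⟨g, hg, hadj, hpos⟩ :=
    hM.exists_adjacent_pos_lt (restrictL_subset _ _) prefixPos_injOn he heM
  obtain ⟨hgE, hgj⟩ := hE g hg
  obtain ⟨hgL, hgi⟩ := mem_prefixEdges.1 hgE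
  have hlt := (prefixPos_lt_prefixPos_iff hgj).1 hpos
  simp only [hgj, hidx] at hlt
  rw [hgj] at hgL hgi
  rcases hadj with hleft | hright
  · have hgi' : (g.1.2 : ℕ) = i := congrArg (fun u => (u.2 : ℕ)) hleft
    have ht : (L j).idxOf g.2 < i := by omega
    have hg' := ih _ ht (ht.trans hi)
    rw [List.getElem_idxOf] at hg'
    have := congrArg (fun f => (f.1.2 : ℕ)) (hM.1.2 _ hg' g hg (Or.inr rfl))
    dsimp only at this
    omega
  · simp only [hright, hidx] at hgi hlt
    omega

end PrefixMatchings

section Antimatroid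

variable {S : Type*} (𝓕 : Set (Finset S))

def IsFeasibleChain (l : List S) : Prop :=
  l.Nodup ∧ ∀ m, (l.take m).toFinset ∈ 𝓕

variable {𝓕}

theorem exists_isFeasibleChain (hempty : ∅ ∈ 𝓕)
    (hacc : ∀ X ∈ 𝓕, X ≠ ∅ → ∃ v ∈ X, X.erase v ∈ 𝓕) {X : Finset S} (hX : X ∈ 𝓕) :
    ∃ l, IsFeasibleChain 𝓕 l ∧ l.toFinset = X := by
  induction X using Finset.strongInduction with
  | H X ih =>
  rcases eq_or_ne X ∅ with rfl | hne
  · exact ⟨[], ⟨List.nodup_nil, fun m => by simpa using hempty⟩, rfl⟩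
  obtain ⟨v, hv, hXv⟩ := hacc X hX hne
  obtain ⟨l, ⟨hnd, hpre⟩, hl⟩ := ih _ (erase_ssubset hv) hXv
  have hvl : v ∉ l := by
    rw [← List.mem_toFinset, hl]
    exact notMem_erase v X
  have hfull : (l ++ [v]).toFinset = X := by
    rw [List.toFinset_append, hl, List.toFinset_cons, List.toFinset_nil, insert_empty,
      union_comm, ← insert_eq, insert_erase hv]
  refine ⟨l ++ [v], ⟨List.concat_eq_append ▸ hnd.concat hvl, fun m => ?_⟩, hfull⟩
  rcases le_or_gt m l.length with hm | hm
  · rw [List.take_append_of_le_length hm]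
    exact hpre m
  · rw [List.take_of_length_le (by simp; omega), hfull]
    exact hX

theorem exists_isFeasibleChain_family [Fintype S] (hempty : ∅ ∈ 𝓕)
    (hacc : ∀ X ∈ 𝓕, X ≠ ∅ → ∃ v ∈ X, X.erase v ∈ 𝓕) :
    ∃ (n : ℕ) (L : Fin n → List S),
      (∀ j, IsFeasibleChain 𝓕 (L j)) ∧ ∀ X ∈ 𝓕, ∃ j, (L j).toFinset = X := by
  choose ch hch using fun X : 𝓕 => exists_isFeasibleChain hempty hacc X.2
  obtain ⟨n, ⟨e⟩⟩ := Finite.exists_equiv_fin 𝓕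
  refine ⟨n, ch ∘ e.symm, fun j => (hch _).1, fun X hX => ⟨e ⟨X, hX⟩, ?_⟩⟩
  simpa using (hch ⟨X, hX⟩).2

end Antimatroid

/-- Every antimatroid `(S, 𝓕)` admits a representation by maximum-weight
matchings: there is a weighted matching instance with right vertex set `S`,
all of whose matchings have pairwise distinct weights, whose induced map `F`
has codomain exactly `𝓕`. -/
theorem antimatroid_mm_representation {S : Type*} [Fintype S]
    (𝓕 : Set (Finset S))
    (hempty : ∅ ∈ 𝓕)
    (hacc : ∀ X ∈ 𝓕, X ≠ ∅ → ∃ v ∈ X, X.erase v ∈ 𝓕)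
    (hunion : ∀ X ∈ 𝓕, ∀ Y ∈ 𝓕, X ∪ Y ∈ 𝓕) :
    ∃ (U : Type) (_ : Fintype U) (E : Finset (U × S)) (w : U × S → ℝ),
      DistinctWeights E w ∧
      mmFamily E w = 𝓕 := by
  obtain ⟨n, L, hL, hsurj⟩ := exists_isFeasibleChain_family hempty hacc
  refine ⟨Fin n × Fin (Fintype.card S), inferInstance, prefixEdges L _, prefixWeight L _,
    distinctWeights_lexWeight prefixPos_injOn, Set.ext fun X => ⟨?_, fun hX => ?_⟩⟩
  · rintro ⟨U', M, hM, rfl⟩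
    rw [hM.image_snd_eq_sup_prefix]
    exact sup_induction hempty (fun _ h₁ _ h₂ => hunion _ h₁ _ h₂) fun f _ => (hL f.1.1).2 _
  · obtain ⟨j, rfl⟩ := hsurj X hX
    obtain ⟨M, hM⟩ := exists_isMaxMatching (restrictL (prefixEdges L _) ({j} ×ˢ univ))
      (prefixWeight L (Fintype.card S))
    exact ⟨_, M, hM, (hM.image_snd_eq_of_block (hL j).1 (hL j).1.length_le_card).symm⟩
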